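/- arXiv:1709.08670 — 5 statements merged into one kernel-verified Lean document; each statement's English description precedes it below -/
import Mathlib

section
/- Let ρ be a semimetric on a set X, let N ≥ 1, and let x_1,…,x_N, y_1,…,y_N ∈ X. Then (1/N)·∑_{j=1}^{N} ρ(x_j, y_j) ≤ (3/N²)·∑_{j=1}^{N} ∑_{k=1}^{N} ρ(x_j, y_k). -/
/-- For a semimetric ρ on a set X, N ≥ 1 and points x₁,…,x_N, y₁,…,y_N,
(1/N)·∑ρ(x_j,y_j) ≤ (3/N²)·∑∑ρ(x_j,y_k). -/
theorem semimetric_average_bound {X : Type*} (ρ : X → X → ℝ)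
    (hnonneg : ∀ x y, 0 ≤ ρ x y)
    (hsymm : ∀ x y, ρ x y = ρ y x)
    (hself : ∀ x, ρ x x = 0)
    (htri : ∀ x y z, ρ x z ≤ ρ x y + ρ y z)
    (N : ℕ) (hN : 1 ≤ N) (x y : Fin N → X) :
    (1 / (N : ℝ)) * ∑ j, ρ (x j) (y j) ≤
      (3 / ((N : ℝ) ^ 2)) * ∑ j, ∑ k, ρ (x j) (y k) := by
  have hNpos : (0:ℝ) < N := by exact_mod_cast Nat.lt_of_lt_of_le Nat.zero_lt_one hN
  set S := ∑ j, ∑ k, ρ (x j) (y k) with hS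
  have key : (N:ℝ)^2 * ∑ j, ρ (x j) (y j) ≤ 3 * N * S := by
    have h1 : ∑ j, ∑ _k : Fin N, ∑ _l : Fin N, ρ (x j) (y j)
        = (N:ℝ)^2 * ∑ j, ρ (x j) (y j) := by
      simp [Finset.sum_const, Finset.mul_sum]
      exact Finset.sum_congr rfl fun i _ => by ring
    have h2 : ∀ j k l : Fin N, ρ (x j) (y j) ≤
        ρ (x j) (y l) + ρ (x k) (y l) + ρ (x k) (y j) := by
      intro j k l
      have t1 := htri (x j) (y l) (y j)
      have t2 := htri (y l) (x k) (y j)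
      rw [hsymm (y l) (x k)] at t2
      linarith
    calc (N:ℝ)^2 * ∑ j, ρ (x j) (y j)
        = ∑ j, ∑ k : Fin N, ∑ l : Fin N, ρ (x j) (y j) := h1.symm
      _ ≤ ∑ j, ∑ k, ∑ l, (ρ (x j) (y l) + ρ (x k) (y l) + ρ (x k) (y j)) := by
          apply Finset.sum_le_sum; intro j _
          apply Finset.sum_le_sum; intro k _
          apply Finset.sum_le_sum; intro l _
          exact h2 j k l
      _ = 3 * N * S := by
          have e1 : ∑ j, ∑ _k : Fin N, ∑ l, ρ (x j) (y l) = (N:ℝ) * S := by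
            simp [Finset.sum_const, Finset.mul_sum, hS]
          have e2 : ∑ _j : Fin N, ∑ k, ∑ l, ρ (x k) (y l) = (N:ℝ) * S := by
            simp [Finset.sum_const, hS]
          have e3 : ∑ j, ∑ k, ∑ _l : Fin N, ρ (x k) (y j) = (N:ℝ) * S := by
            simp [Finset.sum_const, Finset.mul_sum, hS]
            rw [Finset.sum_comm]
          simp only [Finset.sum_add_distrib]
          rw [e1, e2, e3]; ring
  rw [div_mul_eq_mul_div, div_mul_eq_mul_div, div_le_div_iff₀ hNpos (by positivity)]
  nlinarith [key, hNpos]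
end

section
/- Let 0 ≤ k ≤ n and let η be a probability measure on {0,1}^ℤ invariant under 𝕊^{2^k}. Then D_n[η] = D_k[η], i.e., ∑_{i=0}^{2^n−1} (𝕊^i η) × (χ_{A_{i,n}} m) = ∑_{i=0}^{2^k−1} (𝕊^i η) × (χ_{A_{i,k}} m). -/
open MeasureTheory Classical

/-- The left shift on {0,1}^ℤ. -/
def shiftZ (w : ℤ → Bool) : ℤ → Bool := fun i => w (i + 1)

/-- The dyadic cylinder A_{r,j} = {α : ∑_{i<j} α_i 2^i = r}. -/
def cylA (r j : ℕ) : Set (ℕ → Bool) :=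
  {α | (∑ i ∈ Finset.range j, if α i then 2 ^ i else 0) = r}

/-!
A cylinder of rank `j` is the disjoint union of the two cylinders of rank `j + 1` obtained by
fixing the next binary digit, `A_{r,j} = A_{r,j+1} ∪ A_{2^j+r,j+1}`. Invariance of `η` under
`𝕊^{2^j}` gives `𝕊^{2^j+r} η = 𝕊^r η`, so the two summands of `D_{j+1}[η]` indexed by `r` and
`2^j + r` merge into the summand of `D_j[η]` indexed by `r`. Hence `D_{j+1}[η] = D_j[η]` as soon as
`η` is `𝕊^{2^j}`-invariant, which for `k ≤ j` follows from `𝕊^{2^k}`-invariance.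
-/

lemma measurable_shiftZ : Measurable shiftZ :=
  measurable_pi_lambda _ fun i => measurable_pi_apply (i + 1)

lemma measurableSet_cylA (r j : ℕ) : MeasurableSet (cylA r j) :=
  (Finset.measurable_sum _ fun i _ => Measurable.ite
    ((measurable_pi_apply i) (measurableSet_singleton true)) measurable_const measurable_const)
    (measurableSet_singleton r)

lemma sum_binary_digits_lt_two_pow (α : ℕ → Bool) (j : ℕ) :
    (∑ i ∈ Finset.range j, if α i then 2 ^ i else 0) < 2 ^ j := by
  induction j with
  | zero => simp
  | succ j ih =>
      rw [Finset.sum_range_succ, pow_succ]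
      split <;> omega

lemma cylA_eq_union_cylA_succ {r j : ℕ} (hr : r < 2 ^ j) :
    cylA r j = cylA r (j + 1) ∪ cylA (2 ^ j + r) (j + 1) := by
  ext α
  have := sum_binary_digits_lt_two_pow α j
  simp only [cylA, Set.mem_ofPred_eq, Set.mem_union, Finset.sum_range_succ]
  split <;> omega

lemma disjoint_cylA_succ (r j : ℕ) : Disjoint (cylA r (j + 1)) (cylA (2 ^ j + r) (j + 1)) := by
  rw [Set.disjoint_left]
  intro α h₁ h₂
  simp only [cylA, Set.mem_ofPred_eq] at h₁ h₂
  have := Nat.two_pow_pos j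
  omega

section DyadicSum

variable {X : Type*} [MeasurableSpace X]

/-- The paper's `D_j[η]`, with the shift `𝕊` replaced by an arbitrary map `T`. -/
noncomputable def dyadicSum (T : X → X) (η : Measure X) (m : Measure (ℕ → Bool)) (j : ℕ) :
    Measure (X × (ℕ → Bool)) :=
  ∑ i ∈ Finset.range (2 ^ j), (η.map T^[i]).prod (m.restrict (cylA i j))

lemma prod_restrict_cylA_succ_add (μ : Measure X) [SFinite μ] (m : Measure (ℕ → Bool))
    [SFinite m] {r j : ℕ} (hr : r < 2 ^ j) :
    μ.prod (m.restrict (cylA r (j + 1))) + μ.prod (m.restrict (cylA (2 ^ j + r) (j + 1))) =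
      μ.prod (m.restrict (cylA r j)) := by
  rw [← Measure.prod_add, ← Measure.restrict_union (disjoint_cylA_succ r j)
    (measurableSet_cylA _ _), ← cylA_eq_union_cylA_succ hr]

lemma map_iterate_add_of_measurePreserving {T : X → X} (hT : Measurable T) {η : Measure X}
    {p : ℕ} (hp : MeasurePreserving T^[p] η η) (r : ℕ) :
    η.map T^[p + r] = η.map T^[r] := by
  rw [add_comm, Function.iterate_add, ← Measure.map_map (hT.iterate r) hp.measurable, hp.map_eq]

lemma dyadicSum_succ {T : X → X} (hT : Measurable T) {η : Measure X} [SFinite η]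
    (m : Measure (ℕ → Bool)) [SFinite m] {j : ℕ} (hη : MeasurePreserving T^[2 ^ j] η η) :
    dyadicSum T η m (j + 1) = dyadicSum T η m j := by
  rw [dyadicSum, pow_succ, mul_two, Finset.sum_range_add, ← Finset.sum_add_distrib]
  refine Finset.sum_congr rfl fun r hr => ?_
  rw [map_iterate_add_of_measurePreserving hT hη,
    prod_restrict_cylA_succ_add _ m (Finset.mem_range.mp hr)]

lemma dyadicSum_eq_of_le {T : X → X} (hT : Measurable T) {η : Measure X} [SFinite η]
    (m : Measure (ℕ → Bool)) [SFinite m] {k n : ℕ} (hkn : k ≤ n)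
    (hη : MeasurePreserving T^[2 ^ k] η η) :
    dyadicSum T η m n = dyadicSum T η m k := by
  induction n, hkn using Nat.le_induction with
  | base => rfl
  | succ j hkj ih =>
      have hηj : MeasurePreserving T^[2 ^ j] η η := by
        rw [← Nat.pow_sub_mul_pow 2 hkj, mul_comm, Function.iterate_mul]
        exact hη.iterate _
      rw [dyadicSum_succ hT m hηj, ih]

end DyadicSum

theorem Dn_eq_Dk_general (k n : ℕ) (hkn : k ≤ n)
    (η : Measure (ℤ → Bool)) [IsProbabilityMeasure η]
    (hη : Measure.map (shiftZ^[2 ^ k]) η = η)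
    (m : Measure (ℕ → Bool)) [IsProbabilityMeasure m] :
    (∑ i ∈ Finset.range (2 ^ n),
        (Measure.map (shiftZ^[i]) η).prod (m.restrict (cylA i n))) =
      ∑ i ∈ Finset.range (2 ^ k),
        (Measure.map (shiftZ^[i]) η).prod (m.restrict (cylA i k)) :=
  dyadicSum_eq_of_le measurable_shiftZ m hkn ⟨measurable_shiftZ.iterate _, hη⟩

/-- If 0 ≤ k ≤ n and η is a probability measure on {0,1}^ℤ invariant under
𝕊^(2^k), then D_n[η] = D_k[η], where D_j[η] = ∑_{i<2^j} (𝕊^i η) × (χ_{A_{i,j}} m). -/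
theorem Dn_eq_Dk (k n : ℕ) (hkn : k ≤ n)
    (η : Measure (ℤ → Bool)) [IsProbabilityMeasure η]
    (hη : Measure.map (shiftZ^[2 ^ k]) η = η)
    (m : Measure (ℕ → Bool)) [IsProbabilityMeasure m]
    (hm : ∀ (s : Finset ℕ) (f : ℕ → Bool),
      m {α | ∀ i ∈ s, α i = f i} = (1 / 2 : ENNReal) ^ s.card) :
    (∑ i ∈ Finset.range (2 ^ n),
        (Measure.map (shiftZ^[i]) η).prod (m.restrict (cylA i n))) =
      ∑ i ∈ Finset.range (2 ^ k),
        (Measure.map (shiftZ^[i]) η).prod (m.restrict (cylA i k)) :=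
  Dn_eq_Dk_general k n hkn η hη m
end

section
/- Let m ≥ 2 and let M_m denote the maximal cardinality of an orbit of the action of the automorphism group 𝒯_m of the binary rooted tree of height m on {0,1}^(leaves), i.e., on binary labellings of the 2^m leaves, by permuting leaves. Then M_{m+1} ≤ 2·M_m², M₂ = 4, and hence M_m ≤ 2^(3·2^(m−2) − 1) for all m ≥ 2. -/
/-- Binary labellings of the leaves of the complete rooted binary tree of height m:
a labelling of the height-(m+1) tree is an ordered pair of labellings of height-m trees. -/
def Lab : ℕ → Type
  | 0 => Bool
  | m + 1 => Lab m × Lab m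

instance instFintypeLab : (m : ℕ) → Fintype (Lab m)
  | 0 => inferInstanceAs (Fintype Bool)
  | m + 1 => letI := instFintypeLab m; inferInstanceAs (Fintype (Lab m × Lab m))

/-- Orbit equivalence of leaf labellings under the automorphism group 𝒯_m of the binary
tree of height m: an automorphism acts on a pair of subtrees by acting on each subtree
and possibly swapping them. -/
def treeEquiv : (m : ℕ) → Lab m → Lab m → Prop
  | 0, a, b => a = b
  | m + 1, a, b =>
      (treeEquiv m a.1 b.1 ∧ treeEquiv m a.2 b.2) ∨
      (treeEquiv m a.1 b.2 ∧ treeEquiv m a.2 b.1)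

/-- M_m: the maximal cardinality of an orbit of 𝒯_m on binary leaf labellings. -/
noncomputable def maxOrbit (m : ℕ) : ℕ :=
  Finset.sup Finset.univ fun w : Lab m => Nat.card {w' : Lab m // treeEquiv m w w'}

/-!
The orbit of `(a, b)` under `𝒯_{m+1}` lies in `O(a) × O(b) ∪ O(b) × O(a)`, so it has at
most `2 |O(a)| |O(b)| ≤ 2 M_m²` elements. Since `2 (2^(e-1))² = 2^(2e-1)`, iterating
`M_{m+1} ≤ 2 M_m²` from `M_2 = 4 = 2^(3-1)` doubles `e` at each step, starting from `e = 3`.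
-/

open Finset

instance instDecidableEqLab : (m : ℕ) → DecidableEq (Lab m)
  | 0 => inferInstanceAs (DecidableEq Bool)
  | m + 1 => letI := instDecidableEqLab m; inferInstanceAs (DecidableEq (Lab m × Lab m))

instance instDecidableRelTreeEquiv : (m : ℕ) → DecidableRel (treeEquiv m)
  | 0, a, b => inferInstanceAs (Decidable (a = b))
  | m + 1, a, b =>
      letI := instDecidableRelTreeEquiv m
      inferInstanceAs (Decidable ((treeEquiv m a.1 b.1 ∧ treeEquiv m a.2 b.2) ∨
        (treeEquiv m a.1 b.2 ∧ treeEquiv m a.2 b.1)))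

def treeOrbit (m : ℕ) (w : Lab m) : Finset (Lab m) :=
  univ.filter (treeEquiv m w)

theorem mem_treeOrbit {m : ℕ} {w w' : Lab m} : w' ∈ treeOrbit m w ↔ treeEquiv m w w' := by
  simp [treeOrbit]

theorem maxOrbit_eq_sup_card_treeOrbit (m : ℕ) :
    maxOrbit m = univ.sup fun w => #(treeOrbit m w) := by
  refine sup_congr rfl fun w _ => ?_
  rw [Nat.card_eq_fintype_card, Fintype.card_subtype, treeOrbit]

theorem card_treeOrbit_le_maxOrbit (m : ℕ) (w : Lab m) : #(treeOrbit m w) ≤ maxOrbit m := by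
  rw [maxOrbit_eq_sup_card_treeOrbit]
  exact le_sup (f := fun w => #(treeOrbit m w)) (mem_univ w)

theorem maxOrbit_two : maxOrbit 2 = 4 := by
  rw [maxOrbit_eq_sup_card_treeOrbit]
  decide

theorem treeOrbit_succ_subset {m : ℕ} (a b : Lab m) :
    treeOrbit (m + 1) (a, b) ⊆
      treeOrbit m a ×ˢ treeOrbit m b ∪ treeOrbit m b ×ˢ treeOrbit m a := by
  -- `Lab (m + 1)` unfolds to a product only up to `def` unfolding, so name the pair type.
  intro (x : Lab m × Lab m) hx
  rcases mem_treeOrbit.1 hx with ⟨h₁, h₂⟩ | ⟨h₁, h₂⟩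
  · exact mem_union_left _ (mem_product.2 ⟨mem_treeOrbit.2 h₁, mem_treeOrbit.2 h₂⟩)
  · exact mem_union_right _ (mem_product.2 ⟨mem_treeOrbit.2 h₂, mem_treeOrbit.2 h₁⟩)

theorem card_treeOrbit_succ_le {m : ℕ} (a b : Lab m) :
    #(treeOrbit (m + 1) (a, b)) ≤ 2 * #(treeOrbit m a) * #(treeOrbit m b) :=
  calc #(treeOrbit (m + 1) (a, b))
      ≤ #(treeOrbit m a ×ˢ treeOrbit m b ∪ treeOrbit m b ×ˢ treeOrbit m a) :=
        card_le_card (treeOrbit_succ_subset a b)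
    _ ≤ #(treeOrbit m a ×ˢ treeOrbit m b) + #(treeOrbit m b ×ˢ treeOrbit m a) :=
        card_union_le _ _
    _ = 2 * #(treeOrbit m a) * #(treeOrbit m b) := by
        rw [card_product, card_product]; ring

theorem maxOrbit_succ_le (m : ℕ) : maxOrbit (m + 1) ≤ 2 * maxOrbit m ^ 2 := by
  rw [maxOrbit_eq_sup_card_treeOrbit (m + 1)]
  refine Finset.sup_le fun (w : Lab m × Lab m) _ => (card_treeOrbit_succ_le w.1 w.2).trans ?_
  rw [sq, ← mul_assoc]
  gcongr <;> exact card_treeOrbit_le_maxOrbit m _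

theorem two_mul_sq_two_pow_pred {e : ℕ} (he : 1 ≤ e) :
    2 * (2 ^ (e - 1)) ^ 2 = 2 ^ (2 * e - 1) := by
  rw [← pow_mul, ← pow_succ']
  congr 1
  omega

theorem le_two_pow_of_le_two_mul_sq {f : ℕ → ℕ} {m₀ c : ℕ} (hc : 1 ≤ c)
    (h₀ : f m₀ ≤ 2 ^ (c - 1)) (hstep : ∀ m, m₀ ≤ m → f (m + 1) ≤ 2 * f m ^ 2) :
    ∀ m, m₀ ≤ m → f m ≤ 2 ^ (c * 2 ^ (m - m₀) - 1) := by
  intro m hm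
  induction m, hm using Nat.le_induction with
  | base => simpa using h₀
  | succ m hm ih =>
    have hexp : 1 ≤ c * 2 ^ (m - m₀) := one_le_mul hc Nat.one_le_two_pow
    calc f (m + 1) ≤ 2 * f m ^ 2 := hstep m hm
      _ ≤ 2 * (2 ^ (c * 2 ^ (m - m₀) - 1)) ^ 2 := by gcongr
      _ = 2 ^ (c * 2 ^ (m + 1 - m₀) - 1) := by
        rw [two_mul_sq_two_pow_pred hexp, Nat.sub_add_comm hm, pow_succ]
        ring_nf

/-- M_{m+1} ≤ 2·M_m² for m ≥ 2, M₂ = 4, and hence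
M_m ≤ 2^(3·2^(m−2) − 1) for all m ≥ 2. -/
theorem maxOrbit_bound :
    (∀ m : ℕ, 2 ≤ m → maxOrbit (m + 1) ≤ 2 * (maxOrbit m) ^ 2) ∧
      maxOrbit 2 = 4 ∧
      ∀ m : ℕ, 2 ≤ m → maxOrbit m ≤ 2 ^ (3 * 2 ^ (m - 2) - 1) :=
  ⟨fun m _ => maxOrbit_succ_le m, maxOrbit_two,
    le_two_pow_of_le_two_mul_sq (by norm_num) (by rw [maxOrbit_two]; norm_num)
      fun m _ => maxOrbit_succ_le m⟩
end

section
/- Let (X, μ) be a probability space and ρ, ρ₁, ρ₂ measurable semimetrics on X with ρ ≤ ρ₁ + ρ₂ almost everywhere with respect to μ × μ. Then for every ε > 0, ℍ_{4ε}(X, μ, ρ) ≤ ℍ_ε(X, μ, ρ₁) + ℍ_ε(X, μ, ρ₂), where ℍ_ε(X, μ, ρ) is the ε-entropy, defined as the binary logarithm of the smallest k such that X can be partitioned into measurable sets X₀, X₁, …, X_k with μ(X₀) < ε and diam_ρ(X_j) < ε for 1 ≤ j ≤ k (and +∞ if no such k exists). -/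
open MeasureTheory

variable {X : Type*} [MeasurableSpace X]

/-- The set of positive integers k such that X can be partitioned into measurable sets
X₀, X₁, …, X_k with μ(X₀) < ε and each X_j (1 ≤ j ≤ k) of ρ-diameter less than ε. -/
def entWitness (μ : Measure X) (ρ : X → X → ℝ) (ε : ℝ) : Set ℕ :=
  {k | 1 ≤ k ∧ ∃ P : Fin (k + 1) → Set X,
    (∀ j, MeasurableSet (P j)) ∧
    Pairwise (Function.onFun Disjoint P) ∧
    (⋃ j, P j) = Set.univ ∧
    μ (P 0) < ENNReal.ofReal ε ∧
    ∀ j : Fin (k + 1), j ≠ 0 → ∀ x ∈ P j, ∀ y ∈ P j, ρ x y < ε}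

/-- The ε-entropy ℍ_ε(X, μ, ρ): the binary logarithm of the smallest k admitting such a
partition, and +∞ if no such k exists. -/
noncomputable def entH (μ : Measure X) (ρ : X → X → ℝ) (ε : ℝ) : ENNReal :=
  ⨅ (k : ℕ) (_ : k ∈ entWitness μ ρ ε), ENNReal.ofReal (Real.logb 2 k)

/-!
Refine a partition witnessing `ℍ_ε(ρ₁)` (k cells) by one witnessing `ℍ_ε(ρ₂)` (l cells), into
k·l cells. By Fubini, almost every x satisfies `ρ x z ≤ ρ₁ x z + ρ₂ x z` for almost every z;
keep only such points, and drop the null cells. Two points x, y of a remaining cell C then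
share a common z ∈ C with both inequalities, so `ρ x y ≤ ρ x z + ρ z y < 2ε + 2ε`. What is
discarded has measure less than `2ε`, and `log₂ (k l) = log₂ k + log₂ l`.
-/

open Set Function

/-- The cells `X₁, …, X_k` of an `entWitness` partition; `X₀` is the complement of their union. -/
structure IsEntropyCover {ι : Type*} (μ : Measure X) (ρ : X → X → ℝ) (ε : ℝ)
    (A : ι → Set X) : Prop where
  measurableSet : ∀ i, MeasurableSet (A i)
  pairwise_disjoint : Pairwise (Disjoint on A)
  measure_compl_lt : μ (⋃ i, A i)ᶜ < ENNReal.ofReal ε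
  dist_lt : ∀ i, ∀ x ∈ A i, ∀ y ∈ A i, ρ x y < ε

namespace IsEntropyCover

variable {ι κ : Type*} {μ : Measure X} {ρ : X → X → ℝ} {ε : ℝ} {A : ι → Set X}

lemma comp_equiv (h : IsEntropyCover μ ρ ε A) (e : κ ≃ ι) : IsEntropyCover μ ρ ε (A ∘ e) where
  measurableSet i := h.measurableSet (e i)
  pairwise_disjoint := h.pairwise_disjoint.comp_of_injective e.injective
  measure_compl_lt := by
    simpa only [comp_apply, e.surjective.iUnion_comp A] using h.measure_compl_lt
  dist_lt i := h.dist_lt (e i)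

lemma pos (h : IsEntropyCover μ ρ ε A) : 0 < ε :=
  ENNReal.ofReal_pos.mp (pos_of_gt h.measure_compl_lt)

end IsEntropyCover

lemma mem_entWitness_iff {μ : Measure X} {ρ : X → X → ℝ} {ε : ℝ} {k : ℕ} :
    k ∈ entWitness μ ρ ε ↔ 1 ≤ k ∧ ∃ A : Fin k → Set X, IsEntropyCover μ ρ ε A := by
  refine and_congr_right fun _ => ⟨?_, ?_⟩
  · rintro ⟨P, hPm, hPd, hPu, hP0, hPdiam⟩
    have hcompl : (⋃ i : Fin k, P i.succ)ᶜ ⊆ P 0 := fun x hx => by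
      obtain ⟨j, hj⟩ := mem_iUnion.mp (hPu ▸ mem_univ x)
      cases j using Fin.cases with
      | zero => exact hj
      | succ i => exact absurd (mem_iUnion.mpr ⟨i, hj⟩) hx
    exact ⟨fun i : Fin k => P i.succ,
      { measurableSet := fun i => hPm _
        pairwise_disjoint := hPd.comp_of_injective (Fin.succ_injective k)
        measure_compl_lt := (measure_mono hcompl).trans_lt hP0
        dist_lt := fun i => hPdiam _ (Fin.succ_ne_zero i) }⟩
  · rintro ⟨A, hA⟩
    refine ⟨Fin.cons (⋃ i, A i)ᶜ A, fun j => ?_, fun j j' hjj' => ?_, ?_, hA.measure_compl_lt,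
      fun j hj => ?_⟩
    · cases j using Fin.cases with
      | zero => exact (MeasurableSet.iUnion hA.measurableSet).compl
      | succ i => exact hA.measurableSet i
    · cases j using Fin.cases <;> cases j' using Fin.cases
      · exact absurd rfl hjj'
      · exact disjoint_compl_left.mono_right (subset_iUnion A _)
      · exact disjoint_compl_right.mono_left (subset_iUnion A _)
      · exact hA.pairwise_disjoint fun h => hjj' (congrArg Fin.succ h)
    · refine eq_univ_of_forall fun x => mem_iUnion.mpr ?_
      by_cases hx : x ∈ ⋃ i, A i
      · obtain ⟨i, hi⟩ := mem_iUnion.mp hx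
        exact ⟨Fin.succ i, hi⟩
      · exact ⟨0, hx⟩
    · cases j using Fin.cases with
      | zero => exact absurd rfl hj
      | succ i => exact hA.dist_lt i

section Refinement

variable {ι κ : Type*} {μ : Measure X} {ρ ρ₁ ρ₂ : X → X → ℝ} {ε : ℝ}

lemma dist_lt_four_mul_of_ae_le_add (hρs : ∀ x y, ρ x y = ρ y x)
    (hρt : ∀ x y z, ρ x z ≤ ρ x y + ρ y z) {C : Set X} (hC : μ C ≠ 0)
    (h₁ : ∀ x ∈ C, ∀ y ∈ C, ρ₁ x y < ε) (h₂ : ∀ x ∈ C, ∀ y ∈ C, ρ₂ x y < ε)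
    {x y : X} (hx : x ∈ C) (hy : y ∈ C)
    (hxa : ∀ᵐ z ∂μ, ρ x z ≤ ρ₁ x z + ρ₂ x z) (hya : ∀ᵐ z ∂μ, ρ y z ≤ ρ₁ y z + ρ₂ y z) :
    ρ x y < 4 * ε := by
  obtain ⟨z, hz, hxz, hyz⟩ :=
    Measure.exists_mem_of_measure_ne_zero_of_ae hC (ae_restrict_of_ae (hxa.and hya))
  calc ρ x y ≤ ρ x z + ρ y z := hρs z y ▸ hρt x z y
    _ < 4 * ε := by linarith [h₁ x hx z hz, h₂ x hx z hz, h₁ y hy z hz, h₂ y hy z hz]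

def refineCells (μ : Measure X) (A : ι → Set X) (B : κ → Set X) (G : Set X) (p : ι × κ) :
    Set X :=
  if μ (A p.1 ∩ B p.2) = 0 then ∅ else A p.1 ∩ B p.2 ∩ G

variable {A : ι → Set X} {B : κ → Set X} {G : Set X}

lemma mem_refineCells {p : ι × κ} {x : X} :
    x ∈ refineCells μ A B G p ↔ μ (A p.1 ∩ B p.2) ≠ 0 ∧ x ∈ A p.1 ∩ B p.2 ∩ G := by
  unfold refineCells
  split_ifs with h <;> simp [h]

lemma measurableSet_refineCells (hA : ∀ i, MeasurableSet (A i)) (hB : ∀ j, MeasurableSet (B j))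
    (hG : MeasurableSet G) (p : ι × κ) : MeasurableSet (refineCells μ A B G p) := by
  unfold refineCells
  split_ifs
  exacts [.empty, ((hA _).inter (hB _)).inter hG]

lemma refineCells_ae_eq (hG : μ Gᶜ = 0) (p : ι × κ) :
    refineCells μ A B G p =ᵐ[μ] (A p.1 ∩ B p.2 : Set X) := by
  unfold refineCells
  split_ifs with h
  · exact (ae_eq_empty.mpr h).symm
  · exact inter_ae_eq_left_of_ae_eq_univ (ae_eq_univ.mpr hG)

lemma measure_compl_iUnion_refineCells_le [Countable ι] [Countable κ] (hG : μ Gᶜ = 0) :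
    μ (⋃ p, refineCells μ A B G p)ᶜ ≤ μ (⋃ i, A i)ᶜ + μ (⋃ j, B j)ᶜ := by
  have hunion : (⋃ p, refineCells μ A B G p) =ᵐ[μ] ((⋃ i, A i) ∩ ⋃ j, B j : Set X) := by
    rw [iUnion_inter_iUnion, ← iUnion_prod' fun p => A p.1 ∩ B p.2]
    exact Filter.EventuallyEq.countable_iUnion (refineCells_ae_eq hG)
  rw [measure_congr hunion.compl, compl_inter]
  exact measure_union_le _ _

lemma pairwise_disjoint_refineCells (hA : Pairwise (Disjoint on A))
    (hB : Pairwise (Disjoint on B)) : Pairwise (Disjoint on refineCells μ A B G) := by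
  rintro ⟨i, j⟩ ⟨i', j'⟩ hne
  refine Set.disjoint_left.mpr fun x hx hx' => ?_
  obtain ⟨-, ⟨hxi, hxj⟩, -⟩ := mem_refineCells.mp hx
  obtain ⟨-, ⟨hxi', hxj'⟩, -⟩ := mem_refineCells.mp hx'
  by_cases hi : i = i'
  · exact (hB fun hj => hne (Prod.ext hi hj)).ne_of_mem hxj hxj' rfl
  · exact (hA hi).ne_of_mem hxi hxi' rfl

lemma IsEntropyCover.refine [SFinite μ] [Countable ι] [Countable κ]
    (hρs : ∀ x y, ρ x y = ρ y x) (hρt : ∀ x y z, ρ x z ≤ ρ x y + ρ y z)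
    (hle : ∀ᵐ p ∂(μ.prod μ), ρ p.1 p.2 ≤ ρ₁ p.1 p.2 + ρ₂ p.1 p.2)
    (hA : IsEntropyCover μ ρ₁ ε A) (hB : IsEntropyCover μ ρ₂ ε B) :
    ∃ S : ι × κ → Set X, IsEntropyCover μ ρ (4 * ε) S := by
  obtain ⟨G, hGae, hGm, hGle⟩ := (Measure.ae_ae_of_ae_prod hle).exists_measurable_mem
  have hG : μ Gᶜ = 0 := mem_ae_iff.mp hGae
  refine ⟨refineCells μ A B G,
    { measurableSet := measurableSet_refineCells hA.measurableSet hB.measurableSet hGm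
      pairwise_disjoint := pairwise_disjoint_refineCells hA.pairwise_disjoint hB.pairwise_disjoint
      measure_compl_lt := ?_
      dist_lt := fun p x hx y hy => ?_ }⟩
  · have hε := hA.pos
    calc μ (⋃ p, refineCells μ A B G p)ᶜ ≤ μ (⋃ i, A i)ᶜ + μ (⋃ j, B j)ᶜ :=
          measure_compl_iUnion_refineCells_le hG
      _ < ENNReal.ofReal ε + ENNReal.ofReal ε :=
          ENNReal.add_lt_add hA.measure_compl_lt hB.measure_compl_lt
      _ ≤ ENNReal.ofReal (4 * ε) := by
          rw [← ENNReal.ofReal_add hε.le hε.le]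
          exact ENNReal.ofReal_le_ofReal (by linarith)
  · obtain ⟨hC, hxC, hxG⟩ := mem_refineCells.mp hx
    obtain ⟨-, hyC, hyG⟩ := mem_refineCells.mp hy
    exact dist_lt_four_mul_of_ae_le_add hρs hρt hC
      (fun x hx y hy => hA.dist_lt p.1 x hx.1 y hy.1)
      (fun x hx y hy => hB.dist_lt p.2 x hx.2 y hy.2) hxC hyC (hGle x hxG) (hGle y hyG)

end Refinement

lemma mul_mem_entWitness {μ : Measure X} [SFinite μ] {ρ ρ₁ ρ₂ : X → X → ℝ} {ε : ℝ}
    (hρs : ∀ x y, ρ x y = ρ y x) (hρt : ∀ x y z, ρ x z ≤ ρ x y + ρ y z)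
    (hle : ∀ᵐ p ∂(μ.prod μ), ρ p.1 p.2 ≤ ρ₁ p.1 p.2 + ρ₂ p.1 p.2) {k l : ℕ}
    (hk : k ∈ entWitness μ ρ₁ ε) (hl : l ∈ entWitness μ ρ₂ ε) :
    k * l ∈ entWitness μ ρ (4 * ε) := by
  obtain ⟨hk1, A, hA⟩ := mem_entWitness_iff.mp hk
  obtain ⟨hl1, B, hB⟩ := mem_entWitness_iff.mp hl
  obtain ⟨S, hS⟩ := hA.refine hρs hρt hle hB
  exact mem_entWitness_iff.mpr ⟨Nat.mul_le_mul hk1 hl1,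
    S ∘ finProdFinEquiv.symm, hS.comp_equiv finProdFinEquiv.symm⟩

lemma ofReal_logb_two_mul {k l : ℕ} (hk : 1 ≤ k) (hl : 1 ≤ l) :
    ENNReal.ofReal (Real.logb 2 (k * l : ℕ)) =
      ENNReal.ofReal (Real.logb 2 k) + ENNReal.ofReal (Real.logb 2 l) := by
  have hk' : (1 : ℝ) ≤ k := Nat.one_le_cast.mpr hk
  have hl' : (1 : ℝ) ≤ l := Nat.one_le_cast.mpr hl
  rw [Nat.cast_mul, Real.logb_mul (by positivity) (by positivity),
    ENNReal.ofReal_add (Real.logb_nonneg one_lt_two hk') (Real.logb_nonneg one_lt_two hl')]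

lemma entH_le_add_of_mul_mem {Y Z : Type*} [MeasurableSpace Y] [MeasurableSpace Z]
    {μ : Measure X} {μ₁ : Measure Y} {μ₂ : Measure Z} {ρ : X → X → ℝ} {ρ₁ : Y → Y → ℝ}
    {ρ₂ : Z → Z → ℝ} {ε ε₁ ε₂ : ℝ}
    (h : ∀ k ∈ entWitness μ₁ ρ₁ ε₁, ∀ l ∈ entWitness μ₂ ρ₂ ε₂, k * l ∈ entWitness μ ρ ε) :
    entH μ ρ ε ≤ entH μ₁ ρ₁ ε₁ + entH μ₂ ρ₂ ε₂ := by
  simp only [entH, ENNReal.iInf_add, ENNReal.add_iInf]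
  refine le_iInf₂ fun l hl => le_iInf₂ fun k hk => ?_
  rw [← ofReal_logb_two_mul hk.1 hl.1]
  exact iInf₂_le _ (h k hk l hl)

theorem entH_subadditive_general (μ : Measure X) [IsProbabilityMeasure μ]
    (ρ ρ₁ ρ₂ : X → X → ℝ)
    (hρs : ∀ x y, ρ x y = ρ y x)
    (hρt : ∀ x y z, ρ x z ≤ ρ x y + ρ y z)
    (hle : ∀ᵐ p ∂(μ.prod μ), ρ p.1 p.2 ≤ ρ₁ p.1 p.2 + ρ₂ p.1 p.2)
    (ε : ℝ) :
    entH μ ρ (4 * ε) ≤ entH μ ρ₁ ε + entH μ ρ₂ ε :=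
  entH_le_add_of_mul_mem fun _ hk _ hl => mul_mem_entWitness hρs hρt hle hk hl

/-- If ρ, ρ₁, ρ₂ are measurable semimetrics with ρ ≤ ρ₁ + ρ₂ a.e. (μ×μ),
then ℍ_{4ε}(X,μ,ρ) ≤ ℍ_ε(X,μ,ρ₁) + ℍ_ε(X,μ,ρ₂) for every ε > 0. -/
theorem entH_subadditive (μ : Measure X) [IsProbabilityMeasure μ]
    (ρ ρ₁ ρ₂ : X → X → ℝ)
    (hρm : Measurable (Function.uncurry ρ))
    (hρ₁m : Measurable (Function.uncurry ρ₁))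
    (hρ₂m : Measurable (Function.uncurry ρ₂))
    (hρnn : ∀ x y, 0 ≤ ρ x y) (hρ₁nn : ∀ x y, 0 ≤ ρ₁ x y) (hρ₂nn : ∀ x y, 0 ≤ ρ₂ x y)
    (hρs : ∀ x y, ρ x y = ρ y x) (hρ₁s : ∀ x y, ρ₁ x y = ρ₁ y x)
    (hρ₂s : ∀ x y, ρ₂ x y = ρ₂ y x)
    (hρ0 : ∀ x, ρ x x = 0) (hρ₁0 : ∀ x, ρ₁ x x = 0) (hρ₂0 : ∀ x, ρ₂ x x = 0)
    (hρt : ∀ x y z, ρ x z ≤ ρ x y + ρ y z)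
    (hρ₁t : ∀ x y z, ρ₁ x z ≤ ρ₁ x y + ρ₁ y z)
    (hρ₂t : ∀ x y z, ρ₂ x z ≤ ρ₂ x y + ρ₂ y z)
    (hle : ∀ᵐ p ∂(μ.prod μ), ρ p.1 p.2 ≤ ρ₁ p.1 p.2 + ρ₂ p.1 p.2)
    (ε : ℝ) (hε : 0 < ε) :
    entH μ ρ (4 * ε) ≤ entH μ ρ₁ ε + entH μ ρ₂ ε :=
  entH_subadditive_general μ ρ ρ₁ ρ₂ hρs hρt hle ε
end

section
/- Let (X, μ) be a probability space and ρ a measurable semimetric on X with ∫∫_{X×X} ρ d(μ×μ) < ε²/2 for some ε > 0. Then ℍ_ε(X, μ, ρ) = 0, i.e., there exists a measurable set X₀ with μ(X₀) < ε such that the complement X \ X₀ has ρ-diameter less than ε. -/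
/-!
Let `g x = ∫ ρ(x, z) dμ(z)` be the mean distance from `x`. Averaging the triangle inequality
`ρ(x, y) ≤ ρ(x, z) + ρ(z, y)` over `z` gives `ρ(x, y) ≤ g x + g y`, so the set `{g < ε/2}` has
diameter less than `ε`. Since `∫ g dμ = ∫∫ ρ d(μ×μ) < (ε/2) ⋅ ε`, Markov's inequality bounds the
measure of its complement `{g ≥ ε/2}` by `ε`.
-/

open MeasureTheory Function
open scoped ENNReal

namespace MeasureTheory

variable {X : Type*} [MeasurableSpace X] {μ : Measure X} {d : X → X → ℝ≥0∞}

theorem le_lintegral_add_lintegral_of_triangle [IsProbabilityMeasure μ]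
    (hd : ∀ x, Measurable (d x)) (hsymm : ∀ x y, d x y = d y x)
    (htri : ∀ x y z, d x z ≤ d x y + d y z) (x y : X) :
    d x y ≤ ∫⁻ z, d x z ∂μ + ∫⁻ z, d y z ∂μ :=
  calc d x y = ∫⁻ _, d x y ∂μ := by simp
    _ ≤ ∫⁻ z, d x z + d y z ∂μ :=
      lintegral_mono fun z => (htri x z y).trans_eq (by rw [hsymm z y])
    _ = ∫⁻ z, d x z ∂μ + ∫⁻ z, d y z ∂μ := lintegral_add_left (hd x) _

theorem exists_measurableSet_mul_measure_le_lintegral_prod_and_lt [IsProbabilityMeasure μ]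
    (hd : Measurable (uncurry d)) (hsymm : ∀ x y, d x y = d y x)
    (htri : ∀ x y z, d x z ≤ d x y + d y z) (c : ℝ≥0∞) :
    ∃ X₀ : Set X, MeasurableSet X₀ ∧ c * μ X₀ ≤ ∫⁻ p, d p.1 p.2 ∂μ.prod μ ∧
      ∀ x ∈ X₀ᶜ, ∀ y ∈ X₀ᶜ, d x y < c + c := by
  have hd_left : ∀ x, Measurable (d x) := fun x => hd.comp measurable_prodMk_left
  have hmean : Measurable fun x => ∫⁻ z, d x z ∂μ := hd.lintegral_prod_right'
  refine ⟨{x | c ≤ ∫⁻ z, d x z ∂μ}, measurableSet_le measurable_const hmean, ?_, ?_⟩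
  · calc c * μ {x | c ≤ ∫⁻ z, d x z ∂μ} ≤ ∫⁻ x, ∫⁻ z, d x z ∂μ ∂μ :=
          mul_meas_ge_le_lintegral₀ hmean.aemeasurable c
      _ = ∫⁻ p, d p.1 p.2 ∂μ.prod μ := (lintegral_prod _ hd.aemeasurable).symm
  · intro x hx y hy
    simp only [Set.mem_compl_iff, Set.mem_ofPred_eq, not_le] at hx hy
    exact (le_lintegral_add_lintegral_of_triangle hd_left hsymm htri x y).trans_lt
      (ENNReal.add_lt_add hx hy)

end MeasureTheory

theorem entropy_zero_of_small_integral_general {X : Type*} [MeasurableSpace X]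
    (μ : Measure X) [IsProbabilityMeasure μ]
    (ρ : X → X → ℝ)
    (hρm : Measurable (Function.uncurry ρ))
    (hρs : ∀ x y, ρ x y = ρ y x)
    (hρt : ∀ x y z, ρ x z ≤ ρ x y + ρ y z)
    (ε : ℝ) (hε : 0 < ε)
    (hint : ∫⁻ p : X × X, ENNReal.ofReal (ρ p.1 p.2) ∂(μ.prod μ) <
      ENNReal.ofReal (ε ^ 2 / 2)) :
    ∃ X₀ : Set X, MeasurableSet X₀ ∧ μ X₀ < ENNReal.ofReal ε ∧
      ∀ x ∈ X₀ᶜ, ∀ y ∈ X₀ᶜ, ρ x y < ε := by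
  have htri (x y z : X) :
      ENNReal.ofReal (ρ x z) ≤ ENNReal.ofReal (ρ x y) + ENNReal.ofReal (ρ y z) :=
    (ENNReal.ofReal_le_ofReal (hρt x y z)).trans ENNReal.ofReal_add_le
  obtain ⟨X₀, hX₀, hmeas, hdiam⟩ := exists_measurableSet_mul_measure_le_lintegral_prod_and_lt
    (μ := μ) (d := fun x y => ENNReal.ofReal (ρ x y)) hρm.ennreal_ofReal
    (fun x y => by rw [hρs]) htri (ENNReal.ofReal (ε / 2))
  have hhalf : ENNReal.ofReal (ε / 2) + ENNReal.ofReal (ε / 2) = ENNReal.ofReal ε := by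
    rw [← ENNReal.ofReal_add (by positivity) (by positivity), add_halves]
  have hsq : ENNReal.ofReal (ε ^ 2 / 2) = ENNReal.ofReal (ε / 2) * ENNReal.ofReal ε := by
    rw [← ENNReal.ofReal_mul (by positivity)]
    ring_nf
  refine ⟨X₀, hX₀, ?_, fun x hx y hy => ?_⟩
  · rw [hsq] at hint
    exact (ENNReal.mul_lt_mul_iff_right (by simpa using hε) ENNReal.ofReal_ne_top).mp
      (hmeas.trans_lt hint)
  · have hlt := hdiam x hx y hy
    rw [hhalf] at hlt
    exact (ENNReal.ofReal_lt_ofReal_iff hε).mp hlt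

/-- If ρ is a measurable semimetric on a probability space (X, μ) with
∫∫ ρ d(μ×μ) < ε²/2, then ℍ_ε(X, μ, ρ) = 0: there is a measurable set X₀ with
μ(X₀) < ε whose complement has ρ-diameter less than ε. -/
theorem entropy_zero_of_small_integral {X : Type*} [MeasurableSpace X]
    (μ : Measure X) [IsProbabilityMeasure μ]
    (ρ : X → X → ℝ)
    (hρm : Measurable (Function.uncurry ρ))
    (hρnn : ∀ x y, 0 ≤ ρ x y)
    (hρs : ∀ x y, ρ x y = ρ y x)
    (hρ0 : ∀ x, ρ x x = 0)
    (hρt : ∀ x y z, ρ x z ≤ ρ x y + ρ y z)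
    (ε : ℝ) (hε : 0 < ε)
    (hint : ∫⁻ p : X × X, ENNReal.ofReal (ρ p.1 p.2) ∂(μ.prod μ) <
      ENNReal.ofReal (ε ^ 2 / 2)) :
    ∃ X₀ : Set X, MeasurableSet X₀ ∧ μ X₀ < ENNReal.ofReal ε ∧
      ∀ x ∈ X₀ᶜ, ∀ y ∈ X₀ᶜ, ρ x y < ε :=
  entropy_zero_of_small_integral_general μ ρ hρm hρs hρt ε hε hint
end
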